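/- Let (E, V) be an affine space over a field F with V finite-dimensional, and let f : E → E be an affine map with linear part f̄. Then every nonempty affine subspace s of E that is invariant under f (f maps s into s) has dimension at least τ(f): the dimension of the direction of s is ≥ τ(f). -/

import Mathlib

/-!
Put `N = f̄ - id` and `α = f(A) -ᵥ A` for a point `A ∈ s`; changing `A` changes `α` by an
element of `range N`, so `τ(f) = τ(α, f̄)`. The direction `W` of `s` is
`N`-invariant and contains `α`. By Fitting's lemma, `W = ker (N|_W)^d ⊕ range (N|_W)^d` with
`d = dim W`, and `range (N|_W)^d ⊆ range N` as soon as `d ≥ 1`; hence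
`α ∈ range N + ker N^d`, i.e. `τ(f) ≤ d`.
-/

variable {F V E : Type*} [Field F] [AddCommGroup V] [Module F V] [AddTorsor V E]

/-- `τ(α, L)`: the smallest `k ∈ ℕ` such that
`α ∈ range (L - id) + ker ((L - id)^k)`. -/
noncomputable def tau (L : V →ₗ[F] V) (α : V) : ℕ :=
  sInf {k : ℕ | α ∈ LinearMap.range (L - LinearMap.id : V →ₗ[F] V) ⊔
    LinearMap.ker ((L - LinearMap.id : V →ₗ[F] V) ^ k)}

/-- `τ(f)` for an affine map `f : E → E`: `τ(f(A) -ᵥ A, f.linear)` for a point `A`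
(this does not depend on the choice of `A`). -/
noncomputable def tauAff (f : E →ᵃ[F] E) : ℕ :=
  tau f.linear (f (Classical.arbitrary E) -ᵥ (Classical.arbitrary E))

section Fitting

variable {K M : Type*} [DivisionRing K] [AddCommGroup M] [Module K M]

theorem Module.End.range_sup_ker_pow_finrank_eq_top [FiniteDimensional K M]
    (g : Module.End K M) :
    LinearMap.range g ⊔ LinearMap.ker (g ^ Module.finrank K M) = ⊤ := by
  rcases hd : Module.finrank K M with _ | n
  · have : Subsingleton M := Module.finrank_zero_iff.mp hd
    exact Subsingleton.elim _ _
  have hfitting := (LinearMap.isCompl_iSup_ker_pow_iInf_range_pow g).codisjoint.eq_top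
  have hrange : LinearMap.range (g ^ (n + 1)) ≤ LinearMap.range g := by
    rw [pow_succ']
    exact LinearMap.range_comp_le_range _ _
  refine top_unique ?_
  calc ⊤ = (⨆ m, LinearMap.ker (g ^ m)) ⊔ ⨅ m, LinearMap.range (g ^ m) := hfitting.symm
    _ ≤ LinearMap.ker (g ^ (n + 1)) ⊔ LinearMap.range g :=
      sup_le_sup (iSup_le fun m => hd ▸ g.ker_pow_le_ker_pow_finrank m)
        ((iInf_le _ (n + 1)).trans hrange)
    _ = _ := sup_comm _ _

theorem Module.End.mem_range_sup_ker_pow_finrank_of_mem {N : Module.End K M} {W : Submodule K M}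
    [FiniteDimensional K W] (hW : ∀ v ∈ W, N v ∈ W) {v : M} (hv : v ∈ W) :
    v ∈ LinearMap.range N ⊔ LinearMap.ker (N ^ Module.finrank K W) := by
  have hv' : (⟨v, hv⟩ : W) ∈ LinearMap.range (N.restrict hW) ⊔
      LinearMap.ker (N.restrict hW ^ Module.finrank K W) := by
    rw [Module.End.range_sup_ker_pow_finrank_eq_top]
    exact Submodule.mem_top
  obtain ⟨r, ⟨x, rfl⟩, w, hw, hrw⟩ := Submodule.mem_sup.mp hv'
  rw [show v = N x + w from (congrArg Subtype.val hrw).symm]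
  refine Submodule.add_mem_sup ⟨x, rfl⟩ ?_
  rw [LinearMap.mem_ker, Module.End.pow_restrict] at hw
  simpa using congrArg Subtype.val hw

end Fitting

theorem tau_le_finrank_of_mem {L : V →ₗ[F] V} {W : Submodule F V} [FiniteDimensional F W]
    (hW : ∀ v ∈ W, L v ∈ W) {α : V} (hα : α ∈ W) : tau L α ≤ Module.finrank F W :=
  Nat.sInf_le <|
    Module.End.mem_range_sup_ker_pow_finrank_of_mem (fun v hv => W.sub_mem (hW v hv) hv) hα

theorem tau_add_of_mem_range {L : V →ₗ[F] V} {α β : V}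
    (hβ : β ∈ LinearMap.range (L - LinearMap.id)) : tau L (α + β) = tau L α := by
  unfold tau
  congr 1
  ext k
  exact Submodule.add_mem_iff_left _ (Submodule.mem_sup_left hβ)

theorem tauAff_eq_tau (f : E →ᵃ[F] E) (A : E) : tauAff f = tau f.linear (f A -ᵥ A) := by
  set A₀ := Classical.arbitrary E
  have hβ : (f A₀ -ᵥ A₀) - (f A -ᵥ A) ∈ LinearMap.range (f.linear - LinearMap.id) :=
    ⟨A₀ -ᵥ A, by simp [f.linearMap_vsub, vsub_sub_vsub_comm]⟩
  rw [tauAff, ← tau_add_of_mem_range (α := f A -ᵥ A) hβ, add_sub_cancel]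

theorem AffineSubspace.linear_mem_direction_of_mapsTo {f : E →ᵃ[F] E} {s : AffineSubspace F E}
    (hf : ∀ P ∈ s, f P ∈ s) {v : V} (hv : v ∈ s.direction) : f.linear v ∈ s.direction := by
  have hle : s.map f ≤ s := by
    rintro _ ⟨P, hP, rfl⟩
    exact hf P hP
  have hdir := AffineSubspace.direction_le hle
  rw [AffineSubspace.map_direction] at hdir
  exact hdir (Submodule.mem_map_of_mem hv)

/-- Every nonempty affine subspace of `E` invariant under `f` has
dimension (the dimension of its direction) at least `τ(f)`. -/
theorem tau_le_dim_invariant_flat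
    [FiniteDimensional F V] (f : E →ᵃ[F] E) (s : AffineSubspace F E)
    (hne : (s : Set E).Nonempty) (hinv : ∀ P ∈ s, f P ∈ s) :
    tauAff f ≤ Module.finrank F s.direction := by
  obtain ⟨A, hA⟩ := hne
  rw [tauAff_eq_tau f A]
  exact tau_le_finrank_of_mem (fun _ => s.linear_mem_direction_of_mapsTo hinv)
    (AffineSubspace.vsub_mem_direction (hinv A hA) hA)
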